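/- Let u : ℝ → ℝⁿ solve u' = F₁ u + F₂ u^{⊗2}. Fix N ≥ 1 and let z(t) = (u(t)^{⊗1}, ..., u(t)^{⊗N}) ∈ ℝ^Δ. Then z'(t) − 𝒜_N z(t) has all blocks zero except possibly the N-th block, which equals A_{N+1}^N u(t)^{⊗(N+1)}, where A_{N+1}^N = Σ_{ν=1}^{N} I_n^{⊗(ν-1)} ⊗ F₂ ⊗ I_n^{⊗(N-ν)} and 𝒜_N is the block tridiagonal Carleman matrix with blocks A_i^i = Σ_ν I^{⊗(ν-1)} ⊗ F₁ ⊗ I^{⊗(i-ν)} on the diagonal and A_{i+1}^i = Σ_ν I^{⊗(ν-1)} ⊗ F₂ ⊗ I^{⊗(i-ν)} on the superdiagonal. -/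

import Mathlib

/-- The `i`-th Kronecker power of a vector `u ∈ ℝⁿ`:  `(u^{⊗i}) k = ∏ ν, u (k ν)`. -/
def kronPow {n : ℕ} (u : Fin n → ℝ) (i : ℕ) : (Fin i → Fin n) → ℝ :=
  fun k => ∏ ν, u (k ν)

/-- The Kronecker product of two vectors: `(u ⊗ v) (i, j) = u i * v j`. -/
def vecKron {n m : Type*} (u : n → ℝ) (v : m → ℝ) : n × m → ℝ :=
  fun p => u p.1 * v p.2

/-- The `ν`-th summand of the diagonal block `A_i^i = Σ_ν I^{⊗(ν-1)} ⊗ F₁ ⊗ I^{⊗(i-ν)}`. -/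
def slotMat1 {n : ℕ} {i : ℕ} (F₁ : Matrix (Fin n) (Fin n) ℝ) (ν : Fin (i + 1)) :
    Matrix (Fin (i + 1) → Fin n) (Fin (i + 1) → Fin n) ℝ :=
  fun k l => F₁ (k ν) (l ν) * (if k ∘ ν.succAbove = l ∘ ν.succAbove then (1 : ℝ) else 0)

/-- The `ν`-th summand of the superdiagonal block
`A_{i+1}^i = Σ_ν I^{⊗(ν-1)} ⊗ F₂ ⊗ I^{⊗(i-ν)}`; `F₂` consumes the two adjacent column slots
`ν, ν+1`. -/
def slotMat2 {n : ℕ} {i : ℕ} (F₂ : Matrix (Fin n) (Fin n × Fin n) ℝ) (ν : Fin (i + 1)) :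
    Matrix (Fin (i + 1) → Fin n) (Fin (i + 2) → Fin n) ℝ :=
  fun k l => F₂ (k ν) (l ν.castSucc, l ν.succ) *
    (if k ∘ ν.succAbove = (fun μ => l (ν.castSucc.succAbove (ν.succAbove μ))) then (1 : ℝ) else 0)

/-- The action of the block-tridiagonal truncated Carleman matrix `𝒜_N` (with `F₀ = 0`, so
only the diagonal blocks `A_i^i` and superdiagonal blocks `A_{i+1}^i` are nonzero) on the
truncated state vector `w = (w₁, ..., w_N)`; in the last block row the superdiagonal term is
absent (truncation). -/
def carlemanApply {n N : ℕ} (F₁ : Matrix (Fin n) (Fin n) ℝ)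
    (F₂ : Matrix (Fin n) (Fin n × Fin n) ℝ)
    (w : (i : Fin N) → (Fin (i.val + 1) → Fin n) → ℝ) :
    (i : Fin N) → (Fin (i.val + 1) → Fin n) → ℝ :=
  fun i =>
    (∑ ν : Fin (i.val + 1), slotMat1 F₁ ν).mulVec (w i)
      + (if h : i.val + 1 < N then
          (∑ ν : Fin (i.val + 1), slotMat2 F₂ ν).mulVec (w ⟨i.val + 1, h⟩) else 0)

private lemma prod_erase_succAbove {m : ℕ} (f : Fin (m + 1) → ℝ) (ν : Fin (m + 1)) :
    ∏ μ ∈ Finset.univ.erase ν, f μ = ∏ μ : Fin m, f (ν.succAbove μ) := by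
  conv_lhs => rw [Fin.univ_succAbove m ν, Finset.erase_cons, Finset.prod_map]
  rfl

private lemma kron_deriv {n : ℕ} {u : ℝ → Fin n → ℝ} {u' : Fin n → ℝ} {t : ℝ}
    (hu : HasDerivAt u u' t) (m : ℕ) (k : Fin (m + 1) → Fin n) :
    HasDerivAt (fun s => kronPow (u s) (m + 1) k)
      (∑ ν : Fin (m + 1), u' (k ν) * ∏ μ : Fin m, u t (k (ν.succAbove μ))) t := by
  have h := HasDerivAt.finset_prod (u := (Finset.univ : Finset (Fin (m + 1))))
    (f := fun ν s => u s (k ν)) (f' := fun ν => u' (k ν)) (x := t)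
    (fun ν _ => hasDerivAt_pi.mp hu (k ν))
  have : ∀ ν : Fin (m + 1),
      (∏ μ ∈ Finset.univ.erase ν, u t (k μ)) • u' (k ν)
        = u' (k ν) * ∏ μ : Fin m, u t (k (ν.succAbove μ)) := by
    intro ν
    rw [prod_erase_succAbove (fun μ => u t (k μ)) ν, smul_eq_mul, mul_comm]
  rw [show (∑ ν : Fin (m + 1), u' (k ν) * ∏ μ : Fin m, u t (k (ν.succAbove μ)))
      = ∑ ν : Fin (m + 1), (∏ μ ∈ Finset.univ.erase ν, u t (k μ)) • u' (k ν) from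
    (Finset.sum_congr rfl fun ν _ => (this ν)).symm]
  have e : (fun s => kronPow (u s) (m + 1) k) = ∏ i, fun s => u s (k i) := by
    funext s
    simp [kronPow, Finset.prod_apply]
  rw [e]
  exact h

private lemma slot1_mulVec {n i : ℕ} (F₁ : Matrix (Fin n) (Fin n) ℝ) (u : Fin n → ℝ)
    (ν : Fin (i + 1)) (k : Fin (i + 1) → Fin n) :
    (slotMat1 F₁ ν).mulVec (kronPow u (i + 1)) k
      = F₁.mulVec u (k ν) * ∏ μ : Fin i, u (k (ν.succAbove μ)) := by
  simp only [Matrix.mulVec, dotProduct, slotMat1, kronPow]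
  rw [← Equiv.sum_comp (Fin.insertNthEquiv (fun _ => Fin n) ν)]
  simp only [Fin.insertNthEquiv_apply, Fin.insertNth_apply_same,
    Fin.insertNth_comp_succAbove]
  rw [Fintype.sum_prod_type]
  have hprod : ∀ (a : Fin n) (g : Fin i → Fin n),
      ∏ μ : Fin (i + 1), u (Fin.insertNth (α := fun _ => Fin n) ν a g μ) = u a * ∏ μ : Fin i, u (g μ) := by
    intro a g
    rw [Fin.prod_univ_succAbove _ ν]
    simp
  simp only [hprod, mul_ite, mul_one, mul_zero, ite_mul, zero_mul]
  have hcond : ∀ (a : Fin n) (g : Fin i → Fin n),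
      (Fin.insertNthEquiv (fun _ => Fin n) ν) (a, g) ∘ ν.succAbove = g := fun a g =>
    Fin.insertNth_comp_succAbove ν a g
  simp only [hcond]
  simp only [Finset.sum_ite_eq, Finset.mem_univ, if_true]
  rw [Finset.sum_mul]
  exact Finset.sum_congr rfl fun a _ => by simp [Function.comp]; ring

private lemma slot2_mulVec {n i : ℕ} (F₂ : Matrix (Fin n) (Fin n × Fin n) ℝ) (u : Fin n → ℝ)
    (ν : Fin (i + 1)) (k : Fin (i + 1) → Fin n) :
    (slotMat2 F₂ ν).mulVec (kronPow u (i + 2)) k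
      = F₂.mulVec (vecKron u u) (k ν) * ∏ μ : Fin i, u (k (ν.succAbove μ)) := by
  simp only [Matrix.mulVec, dotProduct, slotMat2, kronPow]
  rw [← Equiv.sum_comp (((Equiv.refl (Fin n)).prodCongr
        (Fin.insertNthEquiv (fun _ => Fin n) ν)).trans
      (Fin.insertNthEquiv (fun _ => Fin n) ν.castSucc))]
  have h2 : ∀ (a : Fin n) (w : Fin (i + 1) → Fin n),
      Fin.insertNth (α := fun _ => Fin n) ν.castSucc a w ν.succ = w ν := fun a w => by
    rw [← Fin.succAbove_castSucc_self ν]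
    exact Fin.insertNth_apply_succAbove _ _ _ _
  have h3 : ∀ (a : Fin n) (w : Fin (i + 1) → Fin n),
      (fun μ => Fin.insertNth (α := fun _ => Fin n) ν.castSucc a w
        (ν.castSucc.succAbove (ν.succAbove μ))) = w ∘ ν.succAbove := fun a w => by
    funext μ
    simp [Function.comp]
  have hprod : ∀ (a : Fin n) (w : Fin (i + 1) → Fin n),
      ∏ μ : Fin (i + 2), u (Fin.insertNth (α := fun _ => Fin n) ν.castSucc a w μ)
        = u a * ∏ μ : Fin (i + 1), u (w μ) := by
    intro a w
    rw [Fin.prod_univ_succAbove _ ν.castSucc]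
    simp
  have hprod2 : ∀ (b : Fin n) (g : Fin i → Fin n),
      ∏ μ : Fin (i + 1), u (Fin.insertNth (α := fun _ => Fin n) ν b g μ)
        = u b * ∏ μ : Fin i, u (g μ) := by
    intro b g
    rw [Fin.prod_univ_succAbove _ ν]
    simp
  simp only [Equiv.trans_apply, Equiv.prodCongr_apply, Equiv.coe_refl, Prod.map,
    id_eq, Fin.insertNthEquiv_apply, Fin.insertNth_apply_same, h2, h3, hprod, hprod2,
    Fin.insertNth_comp_succAbove]
  simp only [Fintype.sum_prod_type]
  simp only [mul_ite, mul_one, mul_zero, ite_mul, zero_mul]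
  have hcond : ∀ (b : Fin n) (g : Fin i → Fin n),
      (Fin.insertNthEquiv (fun _ => Fin n) ν) (b, g) ∘ ν.succAbove = g := fun b g =>
    Fin.insertNth_comp_succAbove ν b g
  simp only [hcond]
  simp only [Finset.sum_ite_eq, Finset.mem_univ, if_true]
  rw [Finset.sum_mul]
  refine Finset.sum_congr rfl fun a _ => ?_
  rw [Finset.sum_mul]
  refine Finset.sum_congr rfl fun b _ => ?_
  simp only [vecKron, Function.comp]
  ring

private lemma combined_mulVec {n m : ℕ} (F₁ : Matrix (Fin n) (Fin n) ℝ)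
    (F₂ : Matrix (Fin n) (Fin n × Fin n) ℝ) (u : Fin n → ℝ) (k : Fin (m + 1) → Fin n) :
    (∑ ν : Fin (m + 1), slotMat1 F₁ ν).mulVec (kronPow u (m + 1)) k
      + (∑ ν : Fin (m + 1), slotMat2 F₂ ν).mulVec (kronPow u (m + 2)) k
    = ∑ ν : Fin (m + 1), (F₁.mulVec u + F₂.mulVec (vecKron u u)) (k ν)
        * ∏ μ : Fin m, u (k (ν.succAbove μ)) := by
  have e1 : (∑ ν : Fin (m + 1), slotMat1 F₁ ν).mulVec (kronPow u (m + 1)) k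
      = ∑ ν : Fin (m + 1), (slotMat1 F₁ ν).mulVec (kronPow u (m + 1)) k := by
    simp only [Matrix.mulVec, dotProduct, Matrix.sum_apply, Finset.sum_mul]
    exact Finset.sum_comm
  have e2 : (∑ ν : Fin (m + 1), slotMat2 F₂ ν).mulVec (kronPow u (m + 2)) k
      = ∑ ν : Fin (m + 1), (slotMat2 F₂ ν).mulVec (kronPow u (m + 2)) k := by
    simp only [Matrix.mulVec, dotProduct, Matrix.sum_apply, Finset.sum_mul]
    exact Finset.sum_comm
  rw [e1, e2, ← Finset.sum_add_distrib]
  refine Finset.sum_congr rfl fun ν _ => ?_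
  rw [slot1_mulVec, slot2_mulVec, Pi.add_apply, add_mul]

/-- Truncation residual of Carleman linearization: if `u' = F₁ u + F₂ u^{⊗2}` and
`z(t) = (u^{⊗1}, ..., u^{⊗N})`, then `z'(t) − 𝒜_N z(t)` has all blocks zero except the `N`-th,
which equals `A_{N+1}^N u(t)^{⊗(N+1)}` with
`A_{N+1}^N = Σ_{ν=1}^N I^{⊗(ν-1)} ⊗ F₂ ⊗ I^{⊗(N-ν)}`. -/
theorem carleman_truncation_residual (n N : ℕ) (hN : 1 ≤ N)
    (F₁ : Matrix (Fin n) (Fin n) ℝ) (F₂ : Matrix (Fin n) (Fin n × Fin n) ℝ)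
    (u : ℝ → Fin n → ℝ)
    (hu : ∀ t, HasDerivAt u (F₁.mulVec (u t) + F₂.mulVec (vecKron (u t) (u t))) t)
    (z : ℝ → (i : Fin N) → (Fin (i.val + 1) → Fin n) → ℝ)
    (hz : ∀ t, z t = fun (i : Fin N) => kronPow (u t) (i.val + 1)) (t : ℝ) :
    HasDerivAt z
      (carlemanApply F₁ F₂ (z t)
        + fun (i : Fin N) => if i.val + 1 = N then
            (∑ ν : Fin (i.val + 1), slotMat2 F₂ ν).mulVec (kronPow (u t) (i.val + 2))
          else 0) t := by
  have hzfun : z = fun t => fun (i : Fin N) => kronPow (u t) (i.val + 1) := funext hz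
  subst hzfun
  rw [hasDerivAt_pi]
  intro i
  rw [hasDerivAt_pi]
  intro k
  have hd := kron_deriv (hu t) i.val k
  have hval :
      (carlemanApply F₁ F₂ ((fun (i : Fin N) => kronPow (u t) (i.val + 1)))
        + fun (i : Fin N) => if i.val + 1 = N then
            (∑ ν : Fin (i.val + 1), slotMat2 F₂ ν).mulVec (kronPow (u t) (i.val + 2))
          else 0) i k
      = ∑ ν : Fin (i.val + 1),
          (F₁.mulVec (u t) + F₂.mulVec (vecKron (u t) (u t))) (k ν) *
            ∏ μ : Fin i.val, u t (k (ν.succAbove μ)) := by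
    rw [Pi.add_apply, Pi.add_apply]
    by_cases h : i.val + 1 < N
    · rw [carlemanApply, dif_pos h, if_neg (Nat.ne_of_lt h)]
      simpa using combined_mulVec F₁ F₂ (u t) k
    · have hEq : i.val + 1 = N := le_antisymm i.isLt (not_lt.mp h)
      rw [carlemanApply, dif_neg h, if_pos hEq]
      simpa using combined_mulVec F₁ F₂ (u t) k
  exact hval ▸ hd
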